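/- Fix an integer n ≥ 2, an integer m ≥ 0, and a sequence of positive integers c = (c_1, …, c_m) with c_1 + ⋯ + c_m ≤ ⌊n/2⌋. Then the map w ↦ δ⁻(w) is a bijection from {w ∈ Ω_n : μ⁻(w) = c} onto the set of all m-tuples of positive integers. -/

import Mathlib

open scoped Classical

noncomputable section

/-- The function underlying the simple generator `s_i` of the affine symmetric group. -/
def sFun (n i : ℕ) (j : ℤ) : ℤ :=
  if (n : ℤ) ∣ j - (i : ℤ) then j + 1
  else if (n : ℤ) ∣ j - ((i : ℤ) + 1) then j - 1
  else j

lemma sFun_invol (n i : ℕ) (h : ¬ (n : ℤ) ∣ 1) : Function.Involutive (sFun n i) := by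
  intro j
  unfold sFun
  by_cases h1 : (n : ℤ) ∣ j - (i : ℤ)
  · have h2 : ¬ (n : ℤ) ∣ (j + 1) - (i : ℤ) := by
      intro hd
      have h3 : (n : ℤ) ∣ ((j + 1) - (i : ℤ)) - (j - (i : ℤ)) := dvd_sub hd h1
      have h4 : ((j + 1) - (i : ℤ)) - (j - (i : ℤ)) = 1 := by ring
      rw [h4] at h3
      exact h h3
    have h3 : (n : ℤ) ∣ (j + 1) - ((i : ℤ) + 1) := by
      have h4 : (j + 1) - ((i : ℤ) + 1) = j - (i : ℤ) := by ring
      rw [h4]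
      exact h1
    rw [if_pos h1, if_neg h2, if_pos h3]
    ring
  · by_cases h2 : (n : ℤ) ∣ j - ((i : ℤ) + 1)
    · have h3 : (n : ℤ) ∣ (j - 1) - (i : ℤ) := by
        have h4 : (j - 1) - (i : ℤ) = j - ((i : ℤ) + 1) := by ring
        rw [h4]
        exact h2
      rw [if_neg h1, if_pos h2, if_pos h3]
      ring
    · rw [if_neg h1, if_neg h2, if_neg h1, if_neg h2]

/-- The simple generator `s_i` of the affine symmetric group `S̃_n`:
`j ↦ j+1` if `j ≡ i (mod n)`, `j ↦ j-1` if `j ≡ i+1 (mod n)`, `j ↦ j` otherwise.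
(For the degenerate case `n = 1`, where this recipe does not define a bijection,
we use the identity; all results below assume `n ≥ 2`.) -/
def sGen (n i : ℕ) : Equiv.Perm ℤ :=
  if h : (n : ℤ) ∣ 1 then 1
  else ⟨sFun n i, sFun n i, sFun_invol n i h, sFun_invol n i h⟩

/-- Membership in the affine symmetric group `S̃_n`: a bijection `w : ℤ → ℤ` with
`w (i + n) = w i + n` for all `i` and `∑_{i=1}^n w i = ∑_{i=1}^n i`. -/
def IsAffinePerm (n : ℕ) (w : Equiv.Perm ℤ) : Prop :=
  (∀ i : ℤ, w (i + (n : ℤ)) = w i + (n : ℤ)) ∧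
    ∑ i ∈ Finset.Icc (1 : ℤ) (n : ℤ), w i = ∑ i ∈ Finset.Icc (1 : ℤ) (n : ℤ), i

/-- The length of `w ∈ S̃_n`: the number of pairs `(i, j)` with `i < j`, `1 ≤ j ≤ n`
and `w i > w j`. -/
def ellA (n : ℕ) (w : Equiv.Perm ℤ) : ℕ :=
  Set.ncard {p : ℤ × ℤ | p.1 < p.2 ∧ 1 ≤ p.2 ∧ p.2 ≤ (n : ℤ) ∧ w p.2 < w p.1}

/-- The absolute length of an involution `w ∈ S̃_n`:
`(n − #{i ∈ {1,…,n} : w i = i}) / 2`. -/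
def ellAbs (n : ℕ) (w : Equiv.Perm ℤ) : ℕ :=
  (n - Set.ncard {i : ℤ | 1 ≤ i ∧ i ≤ (n : ℤ) ∧ w i = i}) / 2

/-- `Ω_n`: involutions in `S̃_n` which are minimal length double coset representatives
for the parabolic subgroup generated by `s_1, …, s_{n-1}`. -/
def OmegaSet (n : ℕ) : Set (Equiv.Perm ℤ) :=
  {w | IsAffinePerm n w ∧ w * w = 1 ∧
    ∀ i : ℕ, 1 ≤ i → i ≤ n - 1 →
      ellA n (sGen n i * w) = ellA n w + 1 ∧ ellA n (w * sGen n i) = ellA n w + 1}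

/-- Inverse of a power series with constant term `1` (via `invOfUnit`). -/
def pinv (f : PowerSeries ℤ) : PowerSeries ℤ := PowerSeries.invOfUnit f 1

/-- Substitution of `q ↦ q²` in a power series: `(sq2 f)(q) = f(q²)`. -/
def sq2 (f : PowerSeries ℤ) : PowerSeries ℤ :=
  PowerSeries.mk fun j => if 2 ∣ j then PowerSeries.coeff (j / 2) f else 0

/-- The `q`-integer `[m]_q = 1 + q + ⋯ + q^{m-1}` as a power series. -/
def qInt (m : ℕ) : PowerSeries ℤ := ∑ i ∈ Finset.range m, (PowerSeries.X : PowerSeries ℤ) ^ i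

/-- The `q`-factorial `[m]_q!`. -/
def qFact (m : ℕ) : PowerSeries ℤ := ∏ k ∈ Finset.range m, qInt (k + 1)

/-- The Gaussian binomial coefficient `binom(m, k)_q = [m]_q!/([k]_q![m-k]_q!)`. -/
def qBinom (m k : ℕ) : PowerSeries ℤ := qFact m * pinv (qFact k * qFact (m - k))

/-- The `q`-Pochhammer symbol `(−q^{k+1}; q)_m = ∏_{j=0}^{m-1} (1 + q^{k+1+j})`. -/
def qPochNeg (k m : ℕ) : PowerSeries ℤ :=
  ∏ j ∈ Finset.range m, (1 + (PowerSeries.X : PowerSeries ℤ) ^ (k + 1 + j))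

/-- The Poincaré series `P̃_n(q) = ∑_{w ∈ S̃_n} q^{ℓ(w)}`, defined coefficientwise:
the coefficient of `q^j` is the (finite) number of `w ∈ S̃_n` with `ℓ(w) = j`. -/
def Ptilde (n : ℕ) : PowerSeries ℤ :=
  PowerSeries.mk fun j =>
    (Nat.card {w : Equiv.Perm ℤ // IsAffinePerm n w ∧ ellA n w = j} : ℤ)

/-- The generating set `{s_i : i ∈ K_w}` where
`K_w = {i ∈ {1,…,n−1} : w s_i w ∈ {s_1,…,s_{n−1}}}`. -/
def Kgens (n : ℕ) (w : Equiv.Perm ℤ) : Set (Equiv.Perm ℤ) :=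
  {y | ∃ i : ℕ, 1 ≤ i ∧ i ≤ n - 1 ∧ y = sGen n i ∧
      ∃ j : ℕ, 1 ≤ j ∧ j ≤ n - 1 ∧ w * sGen n i * w = sGen n j}

/-- `F_w(q) = ∑_{x ∈ W_{K_w}, w x w = x} q^{ℓ(x)}`, defined coefficientwise. -/
def Fw (n : ℕ) (w : Equiv.Perm ℤ) : PowerSeries ℤ :=
  PowerSeries.mk fun j =>
    (Nat.card {x : Equiv.Perm ℤ //
        x ∈ Subgroup.closure (Kgens n w) ∧ w * x * w = x ∧ ellA n x = j} : ℤ)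

/-- The `q`-part of the summand of `T_n(s,q)` attached to `w ∈ Ω_n`:
`q^{ℓ(w)} ((1−q)/(1+q))^{ℓ'(w)} P_n(q²) / F_w(q)`. -/
def termW (n : ℕ) (w : Equiv.Perm ℤ) : PowerSeries ℤ :=
  (PowerSeries.X : PowerSeries ℤ) ^ ellA n w *
    ((1 - PowerSeries.X) * pinv (1 + PowerSeries.X)) ^ ellAbs n w *
    sq2 (qFact n) * pinv (Fw n w)

/-- The coefficient of `s^k` in `∑_{w ∈ Ω_n} q^{ℓ(w)} (s(1−q)/(1+q))^{ℓ'(w)} P_n(q²)/F_w(q)`,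
computed coefficientwise in `q` (the sum over `w` converges coefficientwise). -/
def innerSum (n k : ℕ) : PowerSeries ℤ :=
  PowerSeries.mk fun j =>
    ∑' w : {w : Equiv.Perm ℤ // w ∈ OmegaSet n ∧ ellAbs n w = k},
      PowerSeries.coeff j (termW n w.1)

/-- The power series `T_n(s, q) ∈ ℤ[[s, q]]`, realized as an element of `(ℤ[[q]])[[s]]`:
`T_n(s,q) = (P̃_n(q)/P̃_n(q²)) ∑_{w ∈ Ω_n} q^{ℓ(w)} (s(1−q)/(1+q))^{ℓ'(w)} P_n(q²)/F_w(q)`. -/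
def Tser (n : ℕ) : PowerSeries (PowerSeries ℤ) :=
  PowerSeries.mk fun k => Ptilde n * pinv (sq2 (Ptilde n)) * innerSum n k

end

/-- `λ(w) ∈ ℤⁿ`, where `λ_i(w) = ⌊(w(i) − 1)/n⌋` for `i ∈ {1, …, n}`
(indexed here by `i : Fin n`, standing for the position `i + 1`). -/
noncomputable def lam (n : ℕ) (w : Equiv.Perm ℤ) : Fin n → ℤ :=
  fun i => Int.fdiv (w (((i : ℕ) : ℤ) + 1) - 1) (n : ℤ)

/-- The list `(v_1, …, v_m)` of distinct negative values occurring in `λ(w)`, in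
increasing order. -/
noncomputable def negVals (n : ℕ) (w : Equiv.Perm ℤ) : List ℤ :=
  ((Finset.univ.filter fun i : Fin n => lam n w i < 0).image (lam n w)).sort (· ≤ ·)

/-- `μ⁻(w) = (c_1, …, c_m)`: the multiplicities in `λ(w)` of the distinct negative values
`v_1 < ⋯ < v_m`. -/
noncomputable def muNeg (n : ℕ) (w : Equiv.Perm ℤ) : List ℕ :=
  (negVals n w).map fun v => (Finset.univ.filter fun i : Fin n => lam n w i = v).card

/-- `δ⁻(w) = (d_1, …, d_m)` where `d_i = v_{i+1} − v_i` for `i < m` and `d_m = −v_m`: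
the successive differences of `(v_1, …, v_m, 0)`. -/
noncomputable def deltaNeg (n : ℕ) (w : Equiv.Perm ℤ) : List ℤ :=
  ((negVals n w ++ [0]).zip (negVals n w ++ [0]).tail).map fun p : ℤ × ℤ => p.2 - p.1

/-!
The length conditions defining `Ω_n` say exactly that `w(1) < ⋯ < w(n)`: right multiplication
by `s_i` adds the single inversion `(i, i+1)` when `w(i) < w(i+1)`, and `ℓ(s_i w) = ℓ((w s_i)⁻¹)`
for an involution `w`. Writing `w(i) = σ(i) + n λ_i(w)` with `σ(i) ∈ [1, n]`, an involution
induces an involution `σ` with `λ ∘ σ = -λ`, which makes `λ(w)` antisymmetric; increasing windows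
force `σ` to be the stable sort of `-λ(w)`, so `w` is determined by `λ(w)`, and conversely this
`σ` reassembles every weakly increasing antisymmetric `λ` into an element of `Ω_n`.

An antisymmetric `λ` is determined by the multiset of its negative entries, i.e. by the values
`v_1 < ⋯ < v_m` together with their multiplicities `μ⁻`, and every multiset of at most `n / 2`
negative integers occurs. Finally `δ⁻` lists the gaps of `(v_1, …, v_m, 0)`, which are inverted
by `v_k = -(d_k + ⋯ + d_m)`; so positive gap sequences correspond exactly to increasing sequences
of negative values.
-/

namespace Fin

variable {α : Type*} {n : ℕ}

theorem eq_of_monotone_of_map_univ_val_eq [LinearOrder α] {a b : Fin n → α}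
    (ha : Monotone a) (hb : Monotone b)
    (h : Finset.univ.val.map a = Finset.univ.val.map b) : a = b := by
  rw [Fin.univ_val_map, Fin.univ_val_map, Multiset.coe_eq_coe] at h
  exact List.ofFn_injective (h.eq_of_sortedLE ha.sortedLE_ofFn hb.sortedLE_ofFn)

theorem map_univ_val_comp_rev (a : Fin n → α) :
    Finset.univ.val.map (a ∘ Fin.rev) = Finset.univ.val.map a := by
  rw [← Multiset.map_map]
  exact congrArg _ (Multiset.map_univ_val_equiv Fin.revPerm)

theorem apply_rev_eq_neg_of_map_neg_eq [AddCommGroup α] [LinearOrder α] [IsOrderedAddMonoid α]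
    {a : Fin n → α} (ha : Monotone a)
    (h : (Finset.univ.val.map a).map Neg.neg = Finset.univ.val.map a) (i : Fin n) :
    a (Fin.rev i) = -a i := by
  have hmono : Monotone fun j => -a (Fin.rev j) :=
    fun j k hjk => neg_le_neg (ha (Fin.rev_le_rev.mpr hjk))
  have key := eq_of_monotone_of_map_univ_val_eq ha hmono (by
    rw [← h, Multiset.map_map, ← map_univ_val_comp_rev]; rfl)
  simpa using congrFun key (Fin.rev i)

end Fin

section MonotoneAntisymm

variable {n : ℕ}

def IsMonotoneAntisymm (a : Fin n → ℤ) : Prop :=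
  Monotone a ∧ ∀ i, a (Fin.rev i) = -a i

def negEntries (a : Fin n → ℤ) : Multiset ℤ :=
  (Finset.univ.val.map a).filter (· < 0)

theorem map_univ_val_eq_negEntries {a : Fin n → ℤ} (ha : ∀ i, a (Fin.rev i) = -a i) :
    Finset.univ.val.map a = negEntries a
      + Multiset.replicate (n - 2 * Multiset.card (negEntries a)) 0
      + (negEntries a).map Neg.neg := by
  set V := Finset.univ.val.map a
  have hV : V.map Neg.neg = V := calc
    V.map Neg.neg = Finset.univ.val.map (a ∘ Fin.rev) := by
      rw [Multiset.map_map]; exact congrArg (Multiset.map · _) (funext fun i => (ha i).symm)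
    _ = V := Fin.map_univ_val_comp_rev a
  have hpos : V.filter (0 < ·) = (negEntries a).map Neg.neg := by
    conv_lhs => rw [← hV]
    rw [Multiset.filter_map, negEntries]
    congr 1
    exact Multiset.filter_congr fun x _ => by simp
  have hsplit : V = negEntries a + V.filter (· = 0) + V.filter (0 < ·) := by
    ext x
    rw [show negEntries a = V.filter (· < 0) from rfl]
    simp only [Multiset.count_add, Multiset.count_filter]
    split_ifs <;> omega
  rw [Multiset.filter_eq', hpos] at hsplit
  have hcard := congrArg Multiset.card hsplit
  simp only [Multiset.card_add, Multiset.card_replicate, Multiset.card_map] at hcard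
  have hn : Multiset.card V = n := by simp [V]
  rw [hsplit, show V.count 0 = n - 2 * Multiset.card (negEntries a) by omega]

theorem IsMonotoneAntisymm.eq_of_negEntries_eq {a b : Fin n → ℤ} (ha : IsMonotoneAntisymm a)
    (hb : IsMonotoneAntisymm b) (h : negEntries a = negEntries b) : a = b :=
  Fin.eq_of_monotone_of_map_univ_val_eq ha.1 hb.1 <| by
    rw [map_univ_val_eq_negEntries ha.2, map_univ_val_eq_negEntries hb.2, h]

theorem exists_isMonotoneAntisymm_negEntries_eq {N : Multiset ℤ} (hN : ∀ x ∈ N, x < 0)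
    (hcard : 2 * Multiset.card N ≤ n) :
    ∃ a : Fin n → ℤ, IsMonotoneAntisymm a ∧ negEntries a = N := by
  set V := N + Multiset.replicate (n - 2 * Multiset.card N) 0 + N.map Neg.neg
  have hlen : (V.sort (· ≤ ·)).length = n := by
    rw [Multiset.length_sort]
    simp only [V, Multiset.card_add, Multiset.card_replicate, Multiset.card_map]
    omega
  set a : Fin n → ℤ := fun i => (V.sort (· ≤ ·))[i.val]
  have hV : Finset.univ.val.map a = V := by
    rw [Fin.univ_val_map, ← Multiset.sort_eq V (· ≤ ·), Multiset.coe_eq_coe]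
    exact .of_eq (List.ext_getElem (by simp [hlen]) fun i _ _ => by simp [a])
  have hmono : Monotone a := fun i j hij =>
    (Multiset.pairwise_sort V _).sortedLE.getElem_le_getElem_of_le hij
  have hneg : V.map Neg.neg = V := by
    simp only [V, Multiset.map_add, Multiset.map_replicate, neg_zero, Multiset.map_map,
      Function.comp_def, neg_neg, Multiset.map_id']
    abel
  refine ⟨a, ⟨hmono, Fin.apply_rev_eq_neg_of_map_neg_eq hmono (by rw [hV, hneg])⟩, ?_⟩
  rw [negEntries, hV, Multiset.filter_add, Multiset.filter_add, Multiset.filter_eq_self.mpr hN,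
    Multiset.filter_eq_nil.mpr (fun x hx => by simp [Multiset.eq_of_mem_replicate hx]),
    Multiset.filter_eq_nil.mpr (fun x hx => ?_), add_zero, add_zero]
  obtain ⟨y, hy, rfl⟩ := Multiset.mem_map.mp hx
  linarith [hN y hy]

end MonotoneAntisymm

namespace Multiset

variable {α : Type*}

theorem eq_of_sort_toFinset_eq_of_map_count_eq [LinearOrder α] {s t : Multiset α}
    (hv : s.toFinset.sort (· ≤ ·) = t.toFinset.sort (· ≤ ·))
    (hc : (s.toFinset.sort (· ≤ ·)).map s.count = (t.toFinset.sort (· ≤ ·)).map t.count) :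
    s = t := by
  have hsupp : s.toFinset = t.toFinset := by
    rw [← Finset.sort_toFinset s.toFinset (· ≤ ·), hv, Finset.sort_toFinset]
  rw [hv, List.map_inj_left] at hc
  ext x
  by_cases hx : x ∈ t.toFinset
  · exact hc x (by simpa using hx)
  · rw [count_eq_zero_of_notMem (by simpa [← hsupp] using hx),
      count_eq_zero_of_notMem (by simpa using hx)]

def ofRuns : List α → List ℕ → Multiset α
  | x :: v, k :: c => replicate k x + ofRuns v c
  | _, _ => 0

theorem mem_of_mem_ofRuns {x : α} : ∀ {v : List α} {c : List ℕ}, x ∈ ofRuns v c → x ∈ v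
  | [], _, h | _ :: _, [], h => by simp [ofRuns] at h
  | y :: v, k :: c, h => by
    rcases mem_add.mp h with h | h
    · exact List.mem_cons.mpr (Or.inl (eq_of_mem_replicate h))
    · exact List.mem_cons_of_mem y (mem_of_mem_ofRuns h)

theorem card_ofRuns : ∀ {v : List α} {c : List ℕ}, v.length = c.length →
    card (ofRuns v c) = c.sum
  | [], [], _ => rfl
  | _ :: v, k :: c, h => by
    simp [ofRuns, card_ofRuns (v := v) (c := c) (by simpa using h)]

variable [DecidableEq α]

theorem toFinset_ofRuns : ∀ {v : List α} {c : List ℕ}, v.length = c.length → (∀ k ∈ c, 0 < k) →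
    (ofRuns v c).toFinset = v.toFinset
  | [], [], _, _ => rfl
  | y :: v, k :: c, h, hc => by
    have hk : k ≠ 0 := (hc k List.mem_cons_self).ne'
    rw [ofRuns, toFinset_add, toFinset_replicate, if_neg hk,
      toFinset_ofRuns (by simpa using h) fun k hk => hc k (List.mem_cons_of_mem _ hk),
      List.toFinset_cons, Finset.insert_eq]

theorem map_count_ofRuns : ∀ {v : List α} {c : List ℕ}, v.Nodup → v.length = c.length →
    v.map (ofRuns v c).count = c
  | [], [], _, _ => rfl
  | y :: v, k :: c, hv, h => by
    obtain ⟨hy, hv⟩ := List.nodup_cons.mp hv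
    have hrest : v.map (ofRuns (y :: v) (k :: c)).count = v.map (ofRuns v c).count :=
      List.map_congr_left fun x hx => by
        rw [ofRuns, count_add, count_replicate, if_neg (ne_of_mem_of_not_mem hx hy).symm,
          zero_add]
    rw [List.map_cons, hrest, map_count_ofRuns hv (by simpa using h), ofRuns, count_add,
      count_replicate_self, count_eq_zero_of_notMem (fun hm => hy (mem_of_mem_ofRuns hm)),
      add_zero]

end Multiset

namespace List

def gaps (v : List ℤ) : List ℤ :=
  ((v ++ [0]).zip (v ++ [0]).tail).map fun p : ℤ × ℤ => p.2 - p.1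

@[simp] theorem gaps_nil : gaps [] = [] := rfl

theorem gaps_cons (x : ℤ) (v : List ℤ) : gaps (x :: v) = (v.headD 0 - x) :: gaps v := by
  cases v <;> rfl

@[simp] theorem length_gaps (v : List ℤ) : (gaps v).length = v.length := by
  induction v with
  | nil => rfl
  | cons x v ih => rw [gaps_cons, length_cons, length_cons, ih]

theorem sum_gaps (v : List ℤ) : (gaps v).sum = -v.headD 0 := by
  induction v with
  | nil => rfl
  | cons x v ih => rw [gaps_cons, sum_cons, ih, headD_cons]; ring

theorem pos_of_mem_gaps {v : List ℤ} (hv : v.SortedLT) (hneg : ∀ x ∈ v, x < 0) :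
    ∀ d ∈ gaps v, 0 < d := by
  induction v with
  | nil => simp
  | cons x v ih =>
    have hv' := sortedLT_iff_pairwise.mp hv
    obtain ⟨hxv, hv'⟩ := pairwise_cons.mp hv'
    have hhead : x < v.headD 0 := by
      cases v with
      | nil => exact hneg x mem_cons_self
      | cons y v => exact hxv y mem_cons_self
    rw [gaps_cons, forall_mem_cons]
    exact ⟨sub_pos.mpr hhead,
      ih hv'.sortedLT fun y hy => hneg y (mem_cons_of_mem x hy)⟩

def negTailSums : List ℤ → List ℤ
  | [] => []
  | x :: d => -(x + d.sum) :: negTailSums d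

@[simp] theorem length_negTailSums (d : List ℤ) : (negTailSums d).length = d.length := by
  induction d with
  | nil => rfl
  | cons x d ih => simp [negTailSums, ih]

theorem headD_negTailSums (d : List ℤ) : (negTailSums d).headD 0 = -d.sum := by
  cases d <;> simp [negTailSums]

theorem gaps_negTailSums (d : List ℤ) : gaps (negTailSums d) = d := by
  induction d with
  | nil => rfl
  | cons x d ih => rw [negTailSums, gaps_cons, ih, headD_negTailSums]; congr 1; ring

theorem negTailSums_gaps (v : List ℤ) : negTailSums (gaps v) = v := by
  induction v with
  | nil => rfl
  | cons x v ih => rw [gaps_cons, negTailSums, ih, sum_gaps]; congr 1; ring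

theorem gaps_injective : Function.Injective gaps :=
  Function.LeftInverse.injective negTailSums_gaps

theorem neg_sum_le_of_mem_negTailSums {d : List ℤ} (hd : ∀ x ∈ d, 0 ≤ x) :
    ∀ y ∈ negTailSums d, -d.sum ≤ y := by
  induction d with
  | nil => simp [negTailSums]
  | cons x d ih =>
    obtain ⟨hx, hd⟩ := forall_mem_cons.mp hd
    simp only [negTailSums, forall_mem_cons, sum_cons, neg_add, le_refl, true_and]
    exact fun y hy => (ih hd y hy).trans' (by linarith)

theorem neg_of_mem_negTailSums {d : List ℤ} (hd : ∀ x ∈ d, 0 < x) :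
    ∀ y ∈ negTailSums d, y < 0 := by
  induction d with
  | nil => simp [negTailSums]
  | cons x d ih =>
    obtain ⟨hx, hd⟩ := forall_mem_cons.mp hd
    have hsum : 0 ≤ d.sum := sum_nonneg fun y hy => (hd y hy).le
    exact forall_mem_cons.mpr ⟨by linarith, ih hd⟩

theorem sortedLT_negTailSums {d : List ℤ} (hd : ∀ x ∈ d, 0 < x) : (negTailSums d).SortedLT := by
  induction d with
  | nil => exact sortedLT_iff_pairwise.mpr Pairwise.nil
  | cons x d ih =>
    obtain ⟨hx, hd⟩ := forall_mem_cons.mp hd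
    have hle := neg_sum_le_of_mem_negTailSums fun y hy => (hd y hy).le
    refine (pairwise_cons.mpr ⟨fun y hy => ?_, (ih hd).pairwise⟩).sortedLT
    linarith [hle y hy]

end List

section Window

variable {n : ℕ}

def IsPeriodic (n : ℕ) (w : Equiv.Perm ℤ) : Prop :=
  ∀ i : ℤ, w (i + n) = w i + n

def window (n : ℕ) (w : Equiv.Perm ℤ) (i : Fin n) : ℤ := w ((i : ℕ) + 1)

theorem lam_eq_ediv (w : Equiv.Perm ℤ) (i : Fin n) : lam n w i = (window n w i - 1) / n :=
  Int.fdiv_eq_ediv_of_nonneg _ (Int.natCast_nonneg n)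

theorem IsPeriodic.apply_add_mul {w : Equiv.Perm ℤ} (hw : IsPeriodic n w) (x q : ℤ) :
    w (x + q * n) = w x + q * n := by
  have hper : Function.Periodic (fun x => w x - x) (n : ℤ) := fun x => by
    simp only [hw x]; ring
  have := hper.int_mul q x
  simp only [Int.cast_id] at this
  linarith

theorem IsPeriodic.mul {u v : Equiv.Perm ℤ} (hu : IsPeriodic n u) (hv : IsPeriodic n v) :
    IsPeriodic n (u * v) := fun i => by
  simp only [Equiv.Perm.mul_apply, hv i, hu (v i)]

theorem IsPeriodic.inv {w : Equiv.Perm ℤ} (hw : IsPeriodic n w) : IsPeriodic n w⁻¹ := fun i =>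
  w.injective <| by rw [hw, Equiv.Perm.coe_inv, Equiv.apply_symm_apply, Equiv.apply_symm_apply]

def windowIdx (hn : 0 < n) (j : ℤ) : Fin n :=
  ⟨((j - 1) % n).toNat, by
    have := Int.emod_lt_of_pos (j - 1) (Int.natCast_pos.mpr hn)
    have := Int.emod_nonneg (j - 1) (Int.natCast_pos.mpr hn).ne'
    omega⟩

theorem coe_windowIdx (hn : 0 < n) (j : ℤ) : ((windowIdx hn j : ℕ) : ℤ) = (j - 1) % n :=
  Int.toNat_of_nonneg (Int.emod_nonneg _ (Int.natCast_pos.mpr hn).ne')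

theorem eq_windowIdx_add (hn : 0 < n) (j : ℤ) : j = (windowIdx hn j : ℕ) + 1 + (j - 1) / n * n := by
  rw [coe_windowIdx]
  linarith [Int.emod_add_mul_ediv (j - 1) n]

theorem exists_eq_window_add (hn : 0 < n) (j : ℤ) :
    ∃ (r : Fin n) (q : ℤ), j = (r : ℕ) + 1 + q * n :=
  ⟨_, _, eq_windowIdx_add hn j⟩

theorem ediv_window_add (r : Fin n) (q : ℤ) : ((r : ℕ) + 1 + q * n - 1 : ℤ) / n = q := by
  have hr : ((r : ℕ) : ℤ) < n := by exact_mod_cast r.isLt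
  rw [show ((r : ℕ) + 1 + q * n - 1 : ℤ) = (r : ℕ) + q * n by ring,
    Int.add_mul_ediv_right _ _ (by omega), Int.ediv_eq_zero_of_lt (by positivity) hr, zero_add]

theorem windowIdx_window_add (hn : 0 < n) (r : Fin n) (q : ℤ) :
    windowIdx hn ((r : ℕ) + 1 + q * n) = r := by
  have hr : ((r : ℕ) : ℤ) < n := by exact_mod_cast r.isLt
  apply Fin.ext
  have := coe_windowIdx hn ((r : ℕ) + 1 + q * n)
  rw [show ((r : ℕ) + 1 + q * n - 1 : ℤ) = (r : ℕ) + q * n by ring, Int.add_mul_emod_self_right,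
    Int.emod_eq_of_lt (by positivity) hr] at this
  exact_mod_cast this

theorem lam_eq_of_window_eq {w : Equiv.Perm ℤ} {i r : Fin n} {q : ℤ}
    (h : window n w i = (r : ℕ) + 1 + q * n) : lam n w i = q := by
  rw [lam_eq_ediv, h, ediv_window_add]

theorem IsPeriodic.ext {w w' : Equiv.Perm ℤ} (hn : 0 < n) (hw : IsPeriodic n w)
    (hw' : IsPeriodic n w') (h : window n w = window n w') : w = w' := by
  ext j
  rw [eq_windowIdx_add hn j, hw.apply_add_mul, hw'.apply_add_mul]
  exact congrArg (· + _) (congrFun h _)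

end Window

section Length

variable {n : ℕ}

theorem not_dvd_one_of_two_le (hn : 2 ≤ n) : ¬ (n : ℤ) ∣ 1 := fun h => by
  have := Int.le_of_dvd one_pos h
  omega

theorem coe_sGen (hn : 2 ≤ n) (i : ℕ) : ⇑(sGen n i) = sFun n i := by
  rw [sGen, dif_neg (not_dvd_one_of_two_le hn)]
  rfl

theorem sGen_sGen (hn : 2 ≤ n) (i : ℕ) (x : ℤ) : sGen n i (sGen n i x) = x := by
  rw [coe_sGen hn]
  exact sFun_invol n i (not_dvd_one_of_two_le hn) x

theorem sGen_cases (hn : 2 ≤ n) (i : ℕ) (x : ℤ) :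
    ((n : ℤ) ∣ x - i ∧ sGen n i x = x + 1) ∨ ((n : ℤ) ∣ x - (i + 1) ∧ sGen n i x = x - 1) ∨
      (¬ (n : ℤ) ∣ x - i ∧ ¬ (n : ℤ) ∣ x - (i + 1) ∧ sGen n i x = x) := by
  rw [coe_sGen hn, sFun]
  split_ifs <;> simp_all

theorem isPeriodic_sGen (hn : 2 ≤ n) (i : ℕ) : IsPeriodic n (sGen n i) := fun x => by
  simp only [coe_sGen hn, sFun, show x + n - i = x - i + n by ring,
    show x + n - (i + 1) = x - (i + 1) + n by ring, dvd_add_self_right]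
  split_ifs <;> ring

theorem dvd_sub_iff_eq_of_mem_Icc {x c : ℤ} (hx : x ∈ Set.Icc 1 (n : ℤ))
    (hc : c ∈ Set.Icc 1 (n : ℤ)) : (n : ℤ) ∣ x - c ↔ x = c := by
  refine ⟨fun h => ?_, fun h => by simp [h]⟩
  have := Int.eq_zero_of_abs_lt_dvd h
    (abs_lt.mpr ⟨by linarith [hx.1, hc.2], by linarith [hx.2, hc.1]⟩)
  linarith

variable {i : ℕ}

theorem sGen_self (hn : 2 ≤ n) : sGen n i i = i + 1 := by
  rw [coe_sGen hn, sFun, if_pos (by simp)]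

theorem sGen_succ (hn : 2 ≤ n) : sGen n i (i + 1) = i := by
  rw [← sGen_self hn, sGen_sGen hn]

theorem sGen_mem_Icc (hn : 2 ≤ n) (hi : 1 ≤ i) (hi' : i + 1 ≤ n) {x : ℤ}
    (hx : x ∈ Set.Icc 1 (n : ℤ)) : sGen n i x ∈ Set.Icc 1 (n : ℤ) := by
  have hI : (i : ℤ) ∈ Set.Icc 1 (n : ℤ) := ⟨by exact_mod_cast hi, by omega⟩
  have hI' : (i : ℤ) + 1 ∈ Set.Icc 1 (n : ℤ) := ⟨by omega, by exact_mod_cast hi'⟩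
  rcases sGen_cases hn i x with ⟨hd, hs⟩ | ⟨hd, hs⟩ | ⟨-, -, hs⟩
  · obtain rfl := (dvd_sub_iff_eq_of_mem_Icc hx hI).mp hd
    rwa [hs]
  · obtain rfl := (dvd_sub_iff_eq_of_mem_Icc hx hI').mp hd
    rw [hs]; simpa using hI
  · rwa [hs]

theorem sGen_lt_sGen (hn : 2 ≤ n) {a b : ℤ} (hab : a < b)
    (h : ¬ ((n : ℤ) ∣ a - i ∧ b = a + 1)) : sGen n i a < sGen n i b := by
  rcases sGen_cases hn i a with ⟨ha, hsa⟩ | ⟨ha, hsa⟩ | ⟨ha, ha', hsa⟩ <;>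
  rcases sGen_cases hn i b with ⟨hb, hsb⟩ | ⟨hb, hsb⟩ | ⟨hb, hb', hsb⟩ <;>
  rw [hsa, hsb] <;> try omega
  · have hgap : (n : ℤ) ≤ b - a - 1 := Int.le_of_dvd (by omega)
      (by simpa [show b - a - 1 = b - (i + 1) - (a - i) by ring] using dvd_sub hb ha)
    omega
  · exact lt_of_le_of_ne (by omega) fun hba => ha (by simpa [show a - i = b - (i + 1) by omega])

end Length

section Inversions

variable {n : ℕ} {w : Equiv.Perm ℤ}

def invSet (n : ℕ) (w : Equiv.Perm ℤ) : Set (ℤ × ℤ) :=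
  {p | p.1 < p.2 ∧ 1 ≤ p.2 ∧ p.2 ≤ (n : ℤ) ∧ w p.2 < w p.1}

theorem ellA_eq_ncard_invSet (n : ℕ) (w : Equiv.Perm ℤ) : ellA n w = (invSet n w).ncard := rfl

theorem IsPeriodic.exists_abs_apply_sub_le (hn : 0 < n) (hw : IsPeriodic n w) :
    ∃ M, ∀ x, |w x - x| ≤ M := by
  refine ⟨∑ r : Fin n, |w ((r : ℕ) + 1) - ((r : ℕ) + 1)|, fun x => ?_⟩
  have hx := eq_windowIdx_add hn x
  calc |w x - x| = |w ((windowIdx hn x : ℕ) + 1) - ((windowIdx hn x : ℕ) + 1)| := by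
        conv_lhs => rw [hx, hw.apply_add_mul]
        ring_nf
    _ ≤ _ := Finset.single_le_sum (f := fun r : Fin n => |w ((r : ℕ) + 1) - ((r : ℕ) + 1)|)
        (fun _ _ => abs_nonneg _) (Finset.mem_univ _)

theorem IsPeriodic.invSet_finite (hn : 0 < n) (hw : IsPeriodic n w) : (invSet n w).Finite := by
  obtain ⟨M, hM⟩ := hw.exists_abs_apply_sub_le hn
  refine ((Set.finite_Icc (1 - 2 * M) n).prod (Set.finite_Icc 1 (n : ℤ))).subset ?_
  rintro ⟨p, q⟩ ⟨hpq, hq1, hqn, hw⟩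
  have hp := abs_le.mp (hM p)
  have hq := abs_le.mp (hM q)
  exact ⟨⟨by linarith, by linarith⟩, hq1, hqn⟩

theorem invSet_mul_sGen (hn : 2 ≤ n) {i : ℕ} (hi : 1 ≤ i) (hi' : i + 1 ≤ n)
    (h : w i < w (i + 1)) :
    invSet n (w * sGen n i) =
      insert ((i : ℤ), (i : ℤ) + 1) (Prod.map (sGen n i) (sGen n i) ⁻¹' invSet n w) := by
  have hI : (i : ℤ) + 1 ∈ Set.Icc 1 (n : ℤ) := ⟨by omega, by exact_mod_cast hi'⟩
  have hwin {x y : ℤ} (hy : y ∈ Set.Icc 1 (n : ℤ)) (hxi : (n : ℤ) ∣ x - i) (hxy : y = x + 1) :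
      y = i + 1 :=
    (dvd_sub_iff_eq_of_mem_Icc hy hI).mp (by rwa [hxy, show x + 1 - (i + 1) = x - i by ring])
  ext ⟨p, q⟩
  simp only [invSet, Set.mem_insert_iff, Prod.mk.injEq, Set.mem_preimage, Prod.map_fst,
    Prod.map_snd, Set.mem_ofPred_eq, Equiv.Perm.mul_apply]
  constructor
  · rintro ⟨hpq, hq1, hqn, hwq⟩
    by_cases hpi : p = i ∧ q = i + 1
    · exact Or.inl hpi
    have hsq := sGen_mem_Icc hn hi hi' ⟨hq1, hqn⟩
    refine Or.inr ⟨sGen_lt_sGen hn hpq fun ⟨hd, hq⟩ => hpi ?_, hsq.1, hsq.2, hwq⟩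
    have := hwin ⟨hq1, hqn⟩ hd hq
    omega
  · rintro (⟨rfl, rfl⟩ | ⟨hpq, hq1, hqn, hwq⟩)
    · refine ⟨by omega, by omega, by exact_mod_cast hi', ?_⟩
      rwa [sGen_self (by omega), sGen_succ (by omega)]
    have hq := sGen_mem_Icc hn hi hi' ⟨hq1, hqn⟩
    rw [sGen_sGen hn] at hq
    refine ⟨?_, hq.1, hq.2, hwq⟩
    rw [← sGen_sGen hn i p, ← sGen_sGen hn i q]
    refine sGen_lt_sGen hn hpq fun ⟨hd, hsq⟩ => ?_
    have hq' := hwin ⟨hq1, hqn⟩ hd hsq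
    rw [hq', show sGen n i p = i by omega] at hwq
    exact lt_asymm h hwq

theorem ellA_mul_sGen_of_lt (hn : 2 ≤ n) (hw : IsPeriodic n w) {i : ℕ} (hi : 1 ≤ i)
    (hi' : i + 1 ≤ n) (h : w i < w (i + 1)) : ellA n (w * sGen n i) = ellA n w + 1 := by
  have hinj : Function.Injective (Prod.map (sGen n i) (sGen n i)) :=
    (sGen n i).injective.prodMap (sGen n i).injective
  have hnot : ((i : ℤ), (i : ℤ) + 1) ∉ Prod.map (sGen n i) (sGen n i) ⁻¹' invSet n w := by
    simp [invSet, sGen_self (n := n) hn, sGen_succ (n := n) hn]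
  rw [ellA_eq_ncard_invSet, ellA_eq_ncard_invSet, invSet_mul_sGen hn hi hi' h,
    Set.ncard_insert_of_notMem hnot ((hw.invSet_finite (by omega)).preimage hinj.injOn),
    Set.ncard_preimage_of_injective_subset_range hinj]
  rintro p -
  exact ⟨(sGen n i p.1, sGen n i p.2), by simp [sGen_sGen hn]⟩

-- `(p, q) ↦ (w q, w p)`, translated by a multiple of `n` so that the second entry lies in `[1, n]`.
def invPair (n : ℕ) (w : Equiv.Perm ℤ) (p : ℤ × ℤ) : ℤ × ℤ :=
  (w p.2 - (w p.1 - 1) / n * n, w p.1 - (w p.1 - 1) / n * n)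

theorem IsPeriodic.invPair_mem_and_invPair_invPair (hn : 0 < n) (hw : IsPeriodic n w)
    {p : ℤ × ℤ} (hp : p ∈ invSet n w) :
    invPair n w p ∈ invSet n w⁻¹ ∧ invPair n w⁻¹ (invPair n w p) = p := by
  obtain ⟨a, b⟩ := p
  obtain ⟨hab, hb1, hbn, hwab⟩ : a < b ∧ 1 ≤ b ∧ b ≤ n ∧ w b < w a := hp
  have hr := (windowIdx hn (w a)).isLt
  have ha := eq_windowIdx_add hn (w a)
  have hinv (x : ℤ) : w⁻¹ (w x - (w a - 1) / n * n) = x - (w a - 1) / n * n := by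
    rw [sub_eq_add_neg, ← neg_mul, hw.inv.apply_add_mul, Equiv.Perm.coe_inv,
      Equiv.symm_apply_apply]
    ring
  have ht : (b - (w a - 1) / n * n - 1) / n = -((w a - 1) / n) := by
    rw [show b - (w a - 1) / n * n - 1 = b - 1 + -((w a - 1) / n) * n by ring,
      Int.add_mul_ediv_right _ _ (by omega), Int.ediv_eq_zero_of_lt (by omega) (by omega),
      zero_add]
  simp only [invPair, invSet, Set.mem_ofPred_eq, hinv, ht]
  refine ⟨⟨by omega, by omega, by omega, by omega⟩, ?_⟩
  ext <;> simp only <;> ring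

theorem IsPeriodic.ellA_inv (hn : 0 < n) (hw : IsPeriodic n w) : ellA n w⁻¹ = ellA n w := by
  have h₁ := fun p (hp : p ∈ invSet n w) => hw.invPair_mem_and_invPair_invPair hn hp
  have h₂ := fun p (hp : p ∈ invSet n w⁻¹) => by
    simpa using hw.inv.invPair_mem_and_invPair_invPair hn hp
  refine (Set.InvOn.bijOn ⟨fun p hp => (h₁ p hp).2, fun p hp => (h₂ p hp).2⟩
    (fun p hp => (h₁ p hp).1) (fun p hp => (h₂ p hp).1)).ncard_eq.symm

end Inversions

section Omega

variable {n : ℕ} {w : Equiv.Perm ℤ}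

theorem ellA_mul_sGen_of_gt (hn : 2 ≤ n) (hw : IsPeriodic n w) {i : ℕ} (hi : 1 ≤ i)
    (hi' : i + 1 ≤ n) (h : w (i + 1) < w i) : ellA n w = ellA n (w * sGen n i) + 1 := by
  have := ellA_mul_sGen_of_lt hn (hw.mul (isPeriodic_sGen hn i)) hi hi' (by
    simpa only [Equiv.Perm.mul_apply, sGen_self hn, sGen_succ hn] using h)
  rwa [mul_assoc, show sGen n i * sGen n i = 1 from Equiv.ext (sGen_sGen hn i), mul_one] at this

theorem strictMono_window_iff (hn : 2 ≤ n) :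
    StrictMono (window n w) ↔ ∀ i : ℕ, 1 ≤ i → i + 1 ≤ n → w i < w (i + 1) := by
  obtain ⟨m, rfl⟩ : ∃ m, n = m + 1 := ⟨n - 1, by omega⟩
  rw [Fin.strictMono_iff_lt_succ]
  constructor
  · intro h i hi hi'
    have := h ⟨i - 1, by omega⟩
    simp only [window, Fin.val_castSucc, Fin.val_succ] at this
    rwa [show ((i - 1 : ℕ) : ℤ) + 1 = i by omega, show ((i - 1 + 1 : ℕ) : ℤ) + 1 = i + 1 by omega]
      at this
  · intro h i
    have := h (i + 1) (by omega) (by omega)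
    simp only [window, Fin.val_castSucc, Fin.val_succ]
    push_cast at this ⊢
    exact this

theorem mem_omegaSet_iff (hn : 2 ≤ n) :
    w ∈ OmegaSet n ↔ IsAffinePerm n w ∧ w * w = 1 ∧ StrictMono (window n w) := by
  rw [strictMono_window_iff hn]
  refine and_congr_right fun haff => and_congr_right fun hinv => ?_
  have hw : IsPeriodic n w := haff.1
  refine forall_congr' fun i => ?_
  constructor
  · intro hlen hi hi'
    have hlen := (hlen hi (by omega)).2
    rcases lt_trichotomy (w i) (w (i + 1)) with h | h | h
    · exact h
    · exact absurd (w.injective h) (by omega)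
    · have := ellA_mul_sGen_of_gt hn hw hi (by omega) h
      omega
  · intro hmono hi hi'
    have hright := ellA_mul_sGen_of_lt hn hw hi (by omega) (hmono hi (by omega))
    refine ⟨?_, hright⟩
    have hleft : sGen n i * w = (w * sGen n i)⁻¹ := by
      rw [mul_inv_rev, inv_eq_of_mul_eq_one_right hinv,
        inv_eq_of_mul_eq_one_right (Equiv.ext (sGen_sGen hn i))]
    rw [hleft, (hw.mul (isPeriodic_sGen hn i)).ellA_inv (by omega), hright]

end Omega

section Lam

variable {n : ℕ} {w : Equiv.Perm ℤ}

theorem monotone_lam_of_strictMono (h : StrictMono (window n w)) : Monotone (lam n w) :=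
  fun i j hij => by
    rw [lam_eq_ediv, lam_eq_ediv]
    exact Int.ediv_le_ediv (by omega) (by linarith [h.monotone hij])

def residuePerm (hn : 0 < n) (w : Equiv.Perm ℤ) (i : Fin n) : Fin n :=
  windowIdx hn (window n w i)

theorem window_eq_residuePerm (hn : 0 < n) (w : Equiv.Perm ℤ) (i : Fin n) :
    window n w i = (residuePerm hn w i : ℕ) + 1 + lam n w i * n := by
  rw [lam_eq_ediv]
  exact eq_windowIdx_add hn _

theorem window_residuePerm (hn : 0 < n) (hw : IsPeriodic n w) (hinv : w * w = 1) (i : Fin n) :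
    window n w (residuePerm hn w i) = (i : ℕ) + 1 + -lam n w i * n := by
  have h := window_eq_residuePerm hn w i
  rw [window, show ((residuePerm hn w i : ℕ) : ℤ) + 1 = window n w i + -lam n w i * n by
    rw [h]; ring, hw.apply_add_mul, window, ← Equiv.Perm.mul_apply, hinv, Equiv.Perm.one_apply]

theorem lam_residuePerm (hn : 0 < n) (hw : IsPeriodic n w) (hinv : w * w = 1) (i : Fin n) :
    lam n w (residuePerm hn w i) = -lam n w i :=
  lam_eq_of_window_eq (window_residuePerm hn hw hinv i)

theorem residuePerm_involutive (hn : 0 < n) (hw : IsPeriodic n w) (hinv : w * w = 1) :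
    Function.Involutive (residuePerm hn w) := fun i => by
  rw [residuePerm, window_residuePerm hn hw hinv, windowIdx_window_add]

theorem IsAffinePerm.isMonotoneAntisymm_lam (hn : 0 < n) (hw : IsAffinePerm n w)
    (hinv : w * w = 1) (hmono : StrictMono (window n w)) : IsMonotoneAntisymm (lam n w) := by
  have hmono' := monotone_lam_of_strictMono hmono
  refine ⟨hmono', Fin.apply_rev_eq_neg_of_map_neg_eq hmono' ?_⟩
  set σ := (residuePerm_involutive hn hw.1 hinv).toPerm _
  calc (Finset.univ.val.map (lam n w)).map Neg.neg
      = (Finset.univ.val.map σ).map (lam n w) := by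
        rw [Multiset.map_map, Multiset.map_map]
        exact congrArg (Multiset.map · _) (funext fun i => (lam_residuePerm hn hw.1 hinv i).symm)
    _ = Finset.univ.val.map (lam n w) := by rw [Multiset.map_univ_val_equiv]

theorem residuePerm_eq_sort (hn : 0 < n) (hw : IsPeriodic n w) (hinv : w * w = 1)
    (hmono : StrictMono (window n w)) :
    (residuePerm_involutive hn hw hinv).toPerm _ = Tuple.sort (-lam n w) := by
  have hσ (i : Fin n) :
      (-lam n w) ((residuePerm_involutive hn hw hinv).toPerm _ i) = lam n w i := by
    simp [lam_residuePerm hn hw hinv]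
  refine Tuple.eq_sort_iff.mpr ⟨?_, fun i j hij hlam => ?_⟩
  · simpa only [Function.comp_def, hσ] using monotone_lam_of_strictMono hmono
  · rw [hσ, hσ] at hlam
    have := hmono hij
    rw [window_eq_residuePerm hn, window_eq_residuePerm hn, hlam] at this
    simp only [Function.Involutive.coe_toPerm, Fin.lt_def]
    omega

theorem window_eq_sort (hn : 0 < n) (hw : IsPeriodic n w) (hinv : w * w = 1)
    (hmono : StrictMono (window n w)) (i : Fin n) :
    window n w i = (Tuple.sort (-lam n w) i : ℕ) + 1 + lam n w i * n := by
  rw [← residuePerm_eq_sort hn hw hinv hmono, Function.Involutive.coe_toPerm,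
    window_eq_residuePerm hn]

theorem lam_injOn_omegaSet (hn : 2 ≤ n) : Set.InjOn (lam n) (OmegaSet n) := by
  intro w hw w' hw' h
  obtain ⟨haff, hinv, hmono⟩ := (mem_omegaSet_iff hn).mp hw
  obtain ⟨haff', hinv', hmono'⟩ := (mem_omegaSet_iff hn).mp hw'
  refine IsPeriodic.ext (by omega) haff.1 haff'.1 (funext fun i => ?_)
  rw [window_eq_sort (by omega) haff.1 hinv hmono, window_eq_sort (by omega) haff'.1 hinv' hmono',
    h]

end Lam

section Construction

variable {n : ℕ}

theorem sum_Icc_eq_sum_fin (hn : 0 < n) (f : ℤ → ℤ) :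
    ∑ x ∈ Finset.Icc 1 (n : ℤ), f x = ∑ i : Fin n, f ((i : ℕ) + 1) := by
  have hwin {x : ℤ} (hx : x ∈ Finset.Icc 1 (n : ℤ)) : ((windowIdx hn x : ℕ) : ℤ) + 1 = x := by
    have := eq_windowIdx_add hn x
    rw [Finset.mem_Icc] at hx
    rw [Int.ediv_eq_zero_of_lt (by omega) (by omega)] at this
    omega
  refine Finset.sum_nbij' (windowIdx hn) (fun i => (i : ℕ) + 1) (by simp) (fun i _ => ?_)
    (fun x hx => hwin hx) (fun i _ => by simpa using windowIdx_window_add hn i 0)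
    (fun x hx => by rw [hwin hx])
  have := i.isLt
  rw [Finset.mem_Icc]
  omega

def affineOfPerm (hn : 0 < n) (σ : Fin n → Fin n) (a : Fin n → ℤ) (j : ℤ) : ℤ :=
  (σ (windowIdx hn j) : ℕ) + 1 + ((j - 1) / n + a (windowIdx hn j)) * n

variable {hn : 0 < n} {σ : Fin n → Fin n} {a : Fin n → ℤ}

theorem affineOfPerm_window_add (r : Fin n) (q : ℤ) :
    affineOfPerm hn σ a ((r : ℕ) + 1 + q * n) = (σ r : ℕ) + 1 + (q + a r) * n := by
  rw [affineOfPerm, windowIdx_window_add, ediv_window_add]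

theorem affineOfPerm_window (r : Fin n) :
    affineOfPerm hn σ a ((r : ℕ) + 1) = (σ r : ℕ) + 1 + a r * n := by
  simpa using affineOfPerm_window_add (hn := hn) (σ := σ) (a := a) r 0

theorem affineOfPerm_involutive (hσ : Function.Involutive σ) (ha : ∀ i, a (σ i) = -a i) :
    Function.Involutive (affineOfPerm hn σ a) := fun j => by
  obtain ⟨r, q, rfl⟩ := exists_eq_window_add hn j
  rw [affineOfPerm_window_add, affineOfPerm_window_add, hσ, ha]
  ring

theorem affineOfPerm_add (j : ℤ) :
    affineOfPerm hn σ a (j + n) = affineOfPerm hn σ a j + n := by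
  obtain ⟨r, q, rfl⟩ := exists_eq_window_add hn j
  rw [show (r : ℕ) + 1 + q * n + n = (r : ℕ) + 1 + (q + 1) * (n : ℤ) by ring,
    affineOfPerm_window_add, affineOfPerm_window_add]
  ring

theorem sum_affineOfPerm (hσ : Function.Involutive σ) (ha : ∀ i, a (σ i) = -a i) :
    ∑ x ∈ Finset.Icc 1 (n : ℤ), affineOfPerm hn σ a x = ∑ x ∈ Finset.Icc 1 (n : ℤ), x := by
  have hsum_a : ∑ i, a i = 0 := by
    have := Equiv.sum_comp (hσ.toPerm _) a
    simp only [Function.Involutive.coe_toPerm, ha, Finset.sum_neg_distrib] at this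
    linarith
  have hsum_σ : ∑ i, ((σ i : ℕ) : ℤ) = ∑ i : Fin n, ((i : ℕ) : ℤ) :=
    Equiv.sum_comp (hσ.toPerm _) fun i : Fin n => ((i : ℕ) : ℤ)
  rw [sum_Icc_eq_sum_fin hn, sum_Icc_eq_sum_fin hn]
  simp only [affineOfPerm_window, Finset.sum_add_distrib, ← Finset.sum_mul, hsum_a, hsum_σ]
  ring

end Construction

section SortNeg

variable {n : ℕ} {a : Fin n → ℤ}

theorem IsMonotoneAntisymm.apply_sort_neg (ha : IsMonotoneAntisymm a) (i : Fin n) :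
    a (Tuple.sort (-a) i) = -a i := by
  have h := Tuple.unique_monotone (f := -a) (Tuple.monotone_sort (-a))
    (τ := Fin.revPerm) (by simpa [Function.comp_def, ha.2] using ha.1)
  have := congrFun h i
  simp only [Function.comp_apply, Pi.neg_apply, Fin.revPerm_apply, ha.2, neg_neg] at this
  rw [← this, neg_neg]

theorem IsMonotoneAntisymm.sort_neg_lt (ha : IsMonotoneAntisymm a) {i j : Fin n} (hij : i < j)
    (h : a i = a j) : Tuple.sort (-a) i < Tuple.sort (-a) j :=
  (Tuple.eq_sort_iff.mp rfl).2 i j hij (by simp [ha.apply_sort_neg, h])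

theorem IsMonotoneAntisymm.sort_neg_involutive (ha : IsMonotoneAntisymm a) :
    Function.Involutive (Tuple.sort (-a)) := by
  have hsq : Tuple.sort (-a) * Tuple.sort (-a) = Tuple.sort a := by
    refine Tuple.eq_sort_iff.mpr ⟨?_, fun i j hij h => ?_⟩
    · simpa [Function.comp_def, ha.apply_sort_neg] using ha.1
    · simp only [Equiv.Perm.mul_apply, ha.apply_sort_neg, neg_neg] at h ⊢
      exact ha.sort_neg_lt (ha.sort_neg_lt hij h) (by rw [ha.apply_sort_neg, ha.apply_sort_neg, h])
  rw [Tuple.sort_eq_refl_iff_monotone.mpr ha.1] at hsq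
  exact fun i => by simpa using congrFun (congrArg DFunLike.coe hsq) i

end SortNeg

theorem IsMonotoneAntisymm.exists_mem_omegaSet_lam_eq {n : ℕ} {a : Fin n → ℤ} (hn : 2 ≤ n)
    (ha : IsMonotoneAntisymm a) : ∃ w ∈ OmegaSet n, lam n w = a := by
  have hn0 : 0 < n := by omega
  have hinvol := affineOfPerm_involutive (hn := hn0) ha.sort_neg_involutive ha.apply_sort_neg
  set w := hinvol.toPerm _
  have hwin (i : Fin n) : window n w i = (Tuple.sort (-a) i : ℕ) + 1 + a i * n :=
    affineOfPerm_window i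
  have hlam : lam n w = a := funext fun i => lam_eq_of_window_eq (hwin i)
  refine ⟨w, (mem_omegaSet_iff hn).mpr ⟨⟨fun j => affineOfPerm_add j,
    sum_affineOfPerm ha.sort_neg_involutive ha.apply_sort_neg⟩, Equiv.ext hinvol, ?_⟩, hlam⟩
  intro i j hij
  rw [hwin, hwin]
  rcases (ha.1 hij.le).eq_or_lt with h | h
  · have := Fin.lt_def.mp (ha.sort_neg_lt hij h)
    rw [h]
    omega
  · have := (Tuple.sort (-a) i).isLt
    have : (a i + 1) * (n : ℤ) ≤ a j * n := mul_le_mul_of_nonneg_right (by omega) (by positivity)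
    linarith

section NegativeData

variable {n : ℕ}

theorem card_filter_eq_count_negEntries (a : Fin n → ℤ) {v : ℤ} (hv : v < 0) :
    (Finset.univ.filter fun i => a i = v).card = (negEntries a).count v := by
  rw [negEntries, Multiset.count_filter_of_pos (p := (· < 0)) hv, Multiset.count_map,
    Finset.card_def, Finset.filter_val]
  exact congrArg _ (Multiset.filter_congr fun i _ => eq_comm)

theorem negVals_eq (w : Equiv.Perm ℤ) :
    negVals n w = (negEntries (lam n w)).toFinset.sort (· ≤ ·) := by
  rw [negVals]
  congr 1
  ext x
  simp only [Finset.mem_image, Finset.mem_filter, Finset.mem_univ, true_and, negEntries,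
    Multiset.mem_toFinset, Multiset.mem_filter, Fin.univ_val_map, Multiset.mem_coe,
    List.mem_ofFn]
  constructor
  · rintro ⟨i, hi, rfl⟩; exact ⟨⟨i, rfl⟩, hi⟩
  · rintro ⟨⟨i, rfl⟩, hi⟩; exact ⟨i, hi, rfl⟩

theorem neg_of_mem_negVals {w : Equiv.Perm ℤ} {v : ℤ} (hv : v ∈ negVals n w) : v < 0 := by
  rw [negVals_eq, Finset.mem_sort, Multiset.mem_toFinset, negEntries, Multiset.mem_filter] at hv
  exact hv.2

theorem muNeg_eq (w : Equiv.Perm ℤ) :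
    muNeg n w = (negVals n w).map (negEntries (lam n w)).count :=
  List.map_congr_left fun _ hv => card_filter_eq_count_negEntries _ (neg_of_mem_negVals hv)

end NegativeData

theorem lam_bijOn_omegaSet {n : ℕ} (hn : 2 ≤ n) :
    Set.BijOn (lam n) (OmegaSet n) {a | IsMonotoneAntisymm a} := by
  refine ⟨fun w hw => ?_, lam_injOn_omegaSet hn, fun a ha => ?_⟩
  · obtain ⟨haff, hinv, hmono⟩ := (mem_omegaSet_iff hn).mp hw
    exact haff.isMonotoneAntisymm_lam (by omega) hinv hmono
  · obtain ⟨w, hw, rfl⟩ := IsMonotoneAntisymm.exists_mem_omegaSet_lam_eq hn ha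
    exact ⟨w, hw, rfl⟩

theorem eq_of_negVals_eq_of_muNeg_eq {n : ℕ} (hn : 2 ≤ n) {w w' : Equiv.Perm ℤ}
    (hw : w ∈ OmegaSet n) (hw' : w' ∈ OmegaSet n) (hv : negVals n w = negVals n w')
    (hmu : muNeg n w = muNeg n w') : w = w' := by
  have hlam := lam_bijOn_omegaSet hn
  refine hlam.injOn hw hw' ((hlam.mapsTo hw).eq_of_negEntries_eq (hlam.mapsTo hw') ?_)
  refine Multiset.eq_of_sort_toFinset_eq_of_map_count_eq ?_ ?_
  · rwa [← negVals_eq, ← negVals_eq]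
  · rwa [← negVals_eq, ← negVals_eq, ← muNeg_eq, ← muNeg_eq]

theorem exists_mem_omegaSet_negVals_eq_muNeg_eq {n : ℕ} (hn : 2 ≤ n) {v : List ℤ} {c : List ℕ}
    (hv : v.SortedLT) (hvneg : ∀ x ∈ v, x < 0) (hc : ∀ k ∈ c, 0 < k)
    (hlen : v.length = c.length) (hsum : c.sum ≤ n / 2) :
    ∃ w ∈ OmegaSet n, negVals n w = v ∧ muNeg n w = c := by
  obtain ⟨a, ha, hN⟩ := exists_isMonotoneAntisymm_negEntries_eq (n := n) (N := .ofRuns v c)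
    (fun x hx => hvneg x (Multiset.mem_of_mem_ofRuns hx))
    (by rw [Multiset.card_ofRuns hlen]; omega)
  obtain ⟨w, hw, rfl⟩ := (lam_bijOn_omegaSet hn).surjOn ha
  have hV : negVals n w = v := by
    rw [negVals_eq, hN, Multiset.toFinset_ofRuns hlen hc, List.toFinset_sort _ hv.nodup]
    exact hv.sortedLE.pairwise
  exact ⟨w, hw, hV, by rw [muNeg_eq, hN, hV, Multiset.map_count_ofRuns hv.nodup hlen]⟩

theorem deltaNeg_eq_gaps (n : ℕ) (w : Equiv.Perm ℤ) : deltaNeg n w = (negVals n w).gaps := rfl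

/-- Fix `n ≥ 2`, `m ≥ 0` and a sequence `c = (c_1, …, c_m)` of positive
integers with `c_1 + ⋯ + c_m ≤ ⌊n/2⌋`. Then `w ↦ δ⁻(w)` is a bijection from
`{w ∈ Ω_n : μ⁻(w) = c}` onto the set of all `m`-tuples of positive integers. -/
theorem statement15 (n : ℕ) (hn : 2 ≤ n) (m : ℕ) (c : List ℕ)
    (hc : ∀ x ∈ c, 0 < x) (hlen : c.length = m) (hsum : c.sum ≤ n / 2) :
    Set.BijOn (deltaNeg n) {w | w ∈ OmegaSet n ∧ muNeg n w = c}
      {l : List ℤ | l.length = m ∧ ∀ x ∈ l, 0 < x} := by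
  refine ⟨fun w ⟨_, hmu⟩ => ⟨?_, ?_⟩, fun w ⟨hw, hmu⟩ w' ⟨hw', hmu'⟩ hδ => ?_,
    fun d ⟨hd, hdpos⟩ => ?_⟩
  · rw [deltaNeg_eq_gaps, List.length_gaps, ← hlen, ← hmu, muNeg, List.length_map]
  · exact List.pos_of_mem_gaps (Finset.sortedLT_sort _) fun v => neg_of_mem_negVals
  · exact eq_of_negVals_eq_of_muNeg_eq hn hw hw' (List.gaps_injective hδ) (hmu.trans hmu'.symm)
  · obtain ⟨w, hw, hv, hmu⟩ := exists_mem_omegaSet_negVals_eq_muNeg_eq hn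
      (List.sortedLT_negTailSums hdpos) (List.neg_of_mem_negTailSums hdpos) hc
      (by rw [List.length_negTailSums, hd, hlen]) hsum
    exact ⟨w, ⟨hw, hmu⟩, by rw [deltaNeg_eq_gaps, hv, List.gaps_negTailSums]⟩
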